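/- arXiv:1903.00127 — 4 statements merged into one kernel-verified Lean document; each statement's English description precedes it below -/
import Mathlib

section
/- Let θ ∈ (0,1) and let a, k, k' : ℤ → ℕ be finitely supported functions, not all identically zero. Let w(n) = max(1,|n|), let n₁* ≥ n₂* ≥ n₃* ≥ … be the decreasing rearrangement of the finite multiset in which, for each n ∈ ℤ, the value w(n) appears with multiplicity 2a_n + k_n + k'_n, and set m*(k,k') = max(1, |∑_n (k_n − k'_n)·n|). Then ∑_{n∈ℤ} (2a_n + k_n + k'_n)·w(n)^θ − 2·(n₁*)^θ + m*(k,k')^θ ≥ (2 − 2^θ)·∑_{i≥3} (n_i*)^θ. -/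
/-
Let x₁ ≥ x₂ ≥ ⋯ be the sorted values. The largest one satisfies x₁ ≤ m* + ∑_{i≥2} xᵢ: either
its mode occurs at least twice, or it is a single k- or k'-mode n₀, and then |n₀| is recovered
from the momentum m = ∑ (kₙ - k'ₙ) n up to the contributions of the other modes.
Concavity of t ↦ t^θ gives (b + t)^θ ≤ b^θ + (2^θ - 1) t^θ for 0 ≤ t ≤ b. Applied with
b = m* + x₂ and t = x₃, x₄, … in turn, and followed by (m* + x₂)^θ ≤ m*^θ + x₂^θ, this yields
x₁^θ ≤ m*^θ + x₂^θ + (2^θ - 1) ∑_{i≥3} xᵢ^θ, which is the claim.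
-/

open scoped BigOperators

/-- `w(n) = max(1, |n|)` as a real number. -/
noncomputable def wR (n : ℤ) : ℝ := max 1 |(n : ℝ)|

/-- The momentum `m(k,k') = ∑ₙ (kₙ - k'ₙ)·n`. -/
def momZ (k k' : ℤ →₀ ℕ) : ℤ :=
  ∑ n ∈ k.support ∪ k'.support, ((k n : ℤ) - (k' n : ℤ)) * n

/-- `m*(k,k') = max(1, |m(k,k')|)` as a real number. -/
noncomputable def mstarR (k k' : ℤ →₀ ℕ) : ℝ := ((max 1 |momZ k k'| : ℤ) : ℝ)

/-- The multiset in which, for each `n`, the value `w(n)` appears with multiplicity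
`2aₙ + kₙ + k'ₙ`. -/
noncomputable def valMultiset (a k k' : ℤ →₀ ℕ) : Multiset ℝ :=
  (a.support ∪ k.support ∪ k'.support).val.bind
    (fun n => Multiset.replicate (2 * a n + k n + k' n) (wR n))

lemma rpow_add_le_rpow_add_mul_rpow {θ : ℝ} (hθ0 : 0 ≤ θ) (hθ1 : θ ≤ 1) {b t : ℝ}
    (ht : 0 ≤ t) (htb : t ≤ b) :
    (b + t) ^ θ ≤ b ^ θ + (2 ^ θ - 1) * t ^ θ := by
  have h2θ : 1 ≤ (2 : ℝ) ^ θ := Real.one_le_rpow one_le_two hθ0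
  rcases ht.eq_or_lt with rfl | ht
  · simpa using mul_nonneg (sub_nonneg.2 h2θ) (Real.rpow_nonneg le_rfl θ)
  have hb : 0 < b := ht.trans_le htb
  have hf := Real.concaveOn_rpow hθ0 hθ1
  have hu : b + t ∈ Set.Ici (0 : ℝ) := Set.mem_Ici.2 (by linarith)
  have hw : 0 ≤ t / b := by positivity
  have hw' : 0 ≤ 1 - t / b := sub_nonneg.2 ((div_le_one hb).2 htb)
  -- Concavity at `b + t` and `t` with the weights `1 - t/b`, `t/b` and then swapped:
  -- `{b + t, t}` majorizes `{b, 2t}`.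
  have h1 := hf.2 hu ht.le hw' hw (by ring)
  have h2 := hf.2 hu ht.le hw hw' (by ring)
  have e1 : (1 - t / b) * (b + t) + t / b * t = b := by field_simp; ring
  have e2 : t / b * (b + t) + (1 - t / b) * t = 2 * t := by field_simp; ring
  simp only [smul_eq_mul] at h1 h2
  rw [e1] at h1
  rw [e2, Real.mul_rpow zero_le_two ht.le] at h2
  linear_combination h1 + h2

lemma rpow_add_sum_le {θ : ℝ} (hθ0 : 0 ≤ θ) (hθ1 : θ ≤ 1) (M : List ℝ) {b : ℝ}
    (hM0 : ∀ x ∈ M, 0 ≤ x) (hMb : ∀ x ∈ M, x ≤ b) :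
    (b + M.sum) ^ θ ≤ b ^ θ + (2 ^ θ - 1) * (M.map (· ^ θ)).sum := by
  induction M generalizing b with
  | nil => simp
  | cons x M ih =>
    simp only [List.mem_cons, forall_eq_or_imp] at hM0 hMb
    have hx := rpow_add_le_rpow_add_mul_rpow hθ0 hθ1 hM0.1 hMb.1
    have hM := ih hM0.2 fun y hy => (hMb.2 y hy).trans (le_add_of_nonneg_right hM0.1)
    simp only [List.sum_cons, List.map_cons, ← add_assoc]
    linarith

lemma two_sub_two_rpow_mul_sum_drop_two_le {θ : ℝ} (hθ0 : 0 < θ) (hθ1 : θ ≤ 1) {L : List ℝ}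
    (hsort : L.Pairwise (· ≥ ·)) (hL0 : ∀ x ∈ L, 0 ≤ x) {m : ℝ} (hm : 0 ≤ m)
    (hhead : 2 * L.headI ≤ m + L.sum) :
    (2 - 2 ^ θ) * ((L.drop 2).map (· ^ θ)).sum
      ≤ (L.map (· ^ θ)).sum - 2 * L.headI ^ θ + m ^ θ := by
  match L with
  | [] =>
    rw [show ([] : List ℝ).headI = 0 from rfl, Real.zero_rpow hθ0.ne']
    simp only [List.drop_nil, List.map_nil, List.sum_nil]
    linarith [Real.rpow_nonneg hm θ]
  | [x] =>
    simp only [List.mem_singleton, forall_eq, List.headI_cons, List.sum_singleton] at hL0 hhead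
    have hxm := Real.rpow_le_rpow hL0 (by linarith : x ≤ m) hθ0.le
    simp only [List.drop_succ_cons, List.drop_nil, List.map_nil, List.sum_nil, mul_zero,
      List.map_cons, List.sum_cons, List.headI_cons]
    linarith
  | x₁ :: x₂ :: R =>
    simp only [List.pairwise_cons, List.mem_cons, forall_eq_or_imp] at hsort hL0
    simp only [List.headI_cons, List.sum_cons] at hhead
    have hR_le : ∀ y ∈ R, y ≤ m + x₂ := fun y hy =>
      (hsort.2.1 y hy).trans (le_add_of_nonneg_left hm)
    have hx₁ : x₁ ^ θ ≤ m ^ θ + x₂ ^ θ + (2 ^ θ - 1) * (R.map (· ^ θ)).sum :=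
      calc x₁ ^ θ ≤ (m + x₂ + R.sum) ^ θ := Real.rpow_le_rpow hL0.1 (by linarith) hθ0.le
        _ ≤ (m + x₂) ^ θ + (2 ^ θ - 1) * (R.map (· ^ θ)).sum :=
          rpow_add_sum_le hθ0.le hθ1 R hL0.2.2 hR_le
        _ ≤ m ^ θ + x₂ ^ θ + (2 ^ θ - 1) * (R.map (· ^ θ)).sum := by
          gcongr
          exact Real.rpow_add_le_add_rpow hm hL0.2.1 hθ0.le hθ1
    simp only [List.drop_succ_cons, List.drop_zero, List.map_cons, List.sum_cons, List.headI_cons]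
    linarith

lemma one_le_wR (n : ℤ) : 1 ≤ wR n := le_max_left _ _

lemma abs_le_wR (n : ℤ) : |(n : ℝ)| ≤ wR n := le_max_right _ _

lemma mstarR_eq (k k' : ℤ →₀ ℕ) : mstarR k k' = max 1 |(momZ k k' : ℝ)| := by
  simp [mstarR]

lemma one_le_mstarR (k k' : ℤ →₀ ℕ) : 1 ≤ mstarR k k' :=
  (mstarR_eq k k').symm ▸ le_max_left _ _

lemma cast_momZ_eq_sum (k k' : ℤ →₀ ℕ) {s : Finset ℤ} (hs : k.support ∪ k'.support ⊆ s) :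
    (momZ k k' : ℝ) = ∑ n ∈ s, ((k n : ℝ) - k' n) * n := by
  rw [momZ]
  push_cast
  refine Finset.sum_subset hs fun n _ hn => ?_
  simp_all

lemma abs_mul_le_abs_momZ_add_sum (k k' : ℤ →₀ ℕ) {s : Finset ℤ}
    (hs : k.support ∪ k'.support ⊆ s) {n₀ : ℤ} (hn₀ : n₀ ∈ s) :
    |((k n₀ : ℝ) - k' n₀) * n₀|
      ≤ |(momZ k k' : ℝ)| + ∑ n ∈ s.erase n₀, ((k n : ℝ) + k' n) * |(n : ℝ)| := by
  have hmom := cast_momZ_eq_sum k k' hs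
  rw [← Finset.add_sum_erase s _ hn₀] at hmom
  calc |((k n₀ : ℝ) - k' n₀) * n₀|
      = |(momZ k k' : ℝ) - ∑ n ∈ s.erase n₀, ((k n : ℝ) - k' n) * n| := by
        rw [hmom, add_sub_cancel_right]
    _ ≤ |(momZ k k' : ℝ)| + ∑ n ∈ s.erase n₀, |((k n : ℝ) - k' n) * n| :=
        (abs_sub _ _).trans (add_le_add le_rfl (Finset.abs_sum_le_sum_abs _ _))
    _ ≤ |(momZ k k' : ℝ)| + ∑ n ∈ s.erase n₀, ((k n : ℝ) + k' n) * |(n : ℝ)| := by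
        gcongr with n
        rw [abs_mul]
        gcongr
        simpa using abs_sub (k n : ℝ) (k' n)

lemma wR_le_mstarR_add_sum_erase (a k k' : ℤ →₀ ℕ) {n₀ : ℤ} (hk : k n₀ + k' n₀ = 1) :
    wR n₀ ≤ mstarR k k' + ∑ n ∈ (a.support ∪ k.support ∪ k'.support).erase n₀,
      ((2 * a n + k n + k' n : ℕ) : ℝ) * wR n := by
  set U := a.support ∪ k.support ∪ k'.support
  have hn₀ : n₀ ∈ U := by simp [U]; omega
  have hd : |((k n₀ : ℝ) - k' n₀)| = 1 := by
    rcases Nat.add_eq_one_iff.1 hk with ⟨h, h'⟩ | ⟨h, h'⟩ <;> simp [h, h']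
  have hmom := abs_mul_le_abs_momZ_add_sum k k' (s := U) (by intro n; simp [U]; tauto) hn₀
  rw [abs_mul, hd, one_mul] at hmom
  have hsum : ∑ n ∈ U.erase n₀, ((k n : ℝ) + k' n) * |(n : ℝ)|
      ≤ ∑ n ∈ U.erase n₀, ((2 * a n + k n + k' n : ℕ) : ℝ) * wR n := by
    gcongr with n
    · push_cast; linarith [(a n).cast_nonneg (α := ℝ)]
    · exact abs_le_wR n
  have hS : 0 ≤ ∑ n ∈ U.erase n₀, ((2 * a n + k n + k' n : ℕ) : ℝ) * wR n :=
    Finset.sum_nonneg fun n _ => mul_nonneg (Nat.cast_nonneg _) (zero_le_one.trans (one_le_wR n))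
  rw [mstarR_eq]
  exact max_le (by linarith [le_max_left 1 |(momZ k k' : ℝ)|])
    (by linarith [le_max_right 1 |(momZ k k' : ℝ)|])

lemma two_mul_wR_le_mstarR_add_sum (a k k' : ℤ →₀ ℕ) {n₀ : ℤ}
    (hn₀ : 2 * a n₀ + k n₀ + k' n₀ ≠ 0) :
    2 * wR n₀ ≤ mstarR k k' + ∑ n ∈ a.support ∪ k.support ∪ k'.support,
      ((2 * a n + k n + k' n : ℕ) : ℝ) * wR n := by
  set U := a.support ∪ k.support ∪ k'.support
  have hn₀U : n₀ ∈ U := by simp [U]; omega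
  have hS : 0 ≤ ∑ n ∈ U.erase n₀, ((2 * a n + k n + k' n : ℕ) : ℝ) * wR n :=
    Finset.sum_nonneg fun n _ => mul_nonneg (Nat.cast_nonneg _) (zero_le_one.trans (one_le_wR n))
  rw [← Finset.add_sum_erase U _ hn₀U]
  by_cases hc : 2 ≤ 2 * a n₀ + k n₀ + k' n₀
  · have : 2 * wR n₀ ≤ ((2 * a n₀ + k n₀ + k' n₀ : ℕ) : ℝ) * wR n₀ :=
      mul_le_mul_of_nonneg_right (by exact_mod_cast hc) (zero_le_one.trans (one_le_wR n₀))
    linarith [one_le_mstarR k k']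
  · rw [show 2 * a n₀ + k n₀ + k' n₀ = 1 by omega, Nat.cast_one, one_mul]
    linarith [wR_le_mstarR_add_sum_erase a k k' (show k n₀ + k' n₀ = 1 by omega)]

lemma sum_map_valMultiset (a k k' : ℤ →₀ ℕ) (g : ℝ → ℝ) :
    ((valMultiset a k k').map g).sum
      = ∑ n ∈ a.support ∪ k.support ∪ k'.support, ((2 * a n + k n + k' n : ℕ) : ℝ) * g (wR n) := by
  rw [valMultiset, Multiset.map_bind, Multiset.sum_bind, Finset.sum]
  refine congrArg _ (Multiset.map_congr rfl fun n _ => ?_)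
  simp [Multiset.map_replicate, Multiset.sum_replicate, nsmul_eq_mul]

lemma exists_eq_wR_of_mem_valMultiset {a k k' : ℤ →₀ ℕ} {x : ℝ}
    (hx : x ∈ valMultiset a k k') : ∃ n, 2 * a n + k n + k' n ≠ 0 ∧ wR n = x := by
  obtain ⟨n, -, hx⟩ := Multiset.mem_bind.1 hx
  exact ⟨n, (Multiset.mem_replicate.1 hx).1, (Multiset.mem_replicate.1 hx).2.symm⟩

theorem stmt0_general (θ : ℝ) (hθ : θ ∈ Set.Ioo (0:ℝ) 1) (a k k' : ℤ →₀ ℕ)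
    (L : List ℝ) (hsort : L.Pairwise (· ≥ ·))
    (hL : (↑L : Multiset ℝ) = valMultiset a k k') :
    (∑ n ∈ a.support ∪ k.support ∪ k'.support,
        ((2 * a n + k n + k' n : ℕ) : ℝ) * wR n ^ θ)
      - 2 * L.headI ^ θ + mstarR k k' ^ θ
    ≥ (2 - 2 ^ θ) * ((L.drop 2).map (fun x => x ^ θ)).sum := by
  have hmem : ∀ x ∈ L, ∃ n, 2 * a n + k n + k' n ≠ 0 ∧ wR n = x := fun x hx =>
    exists_eq_wR_of_mem_valMultiset (hL ▸ Multiset.mem_coe.2 hx)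
  have hsum : ∀ g : ℝ → ℝ, (L.map g).sum = ∑ n ∈ a.support ∪ k.support ∪ k'.support,
      ((2 * a n + k n + k' n : ℕ) : ℝ) * g (wR n) := fun g => by
    rw [← sum_map_valMultiset, ← hL, Multiset.map_coe, Multiset.sum_coe]
  have hm : 0 ≤ mstarR k k' := zero_le_one.trans (one_le_mstarR k k')
  have hhead : 2 * L.headI ≤ mstarR k k' + L.sum := by
    rcases L with _ | ⟨x, M⟩
    · simpa [show ([] : List ℝ).headI = 0 from rfl] using hm
    · obtain ⟨n₀, hn₀, rfl⟩ := hmem _ List.mem_cons_self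
      have hsum_id := hsum id
      rw [List.map_id] at hsum_id
      rw [List.headI_cons, hsum_id]
      exact two_mul_wR_le_mstarR_add_sum a k k' hn₀
  have hL0 : ∀ x ∈ L, 0 ≤ x := fun x hx => by
    obtain ⟨n, -, rfl⟩ := hmem x hx
    exact zero_le_one.trans (one_le_wR n)
  have := two_sub_two_rpow_mul_sum_drop_two_le hθ.1 hθ.2.le hsort hL0 hm hhead
  rwa [hsum] at this

theorem stmt0 (θ : ℝ) (hθ : θ ∈ Set.Ioo (0:ℝ) 1) (a k k' : ℤ →₀ ℕ)
    (hne : ¬(a = 0 ∧ k = 0 ∧ k' = 0))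
    (L : List ℝ) (hsort : L.Pairwise (· ≥ ·))
    (hL : (↑L : Multiset ℝ) = valMultiset a k k') :
    (∑ n ∈ a.support ∪ k.support ∪ k'.support,
        ((2 * a n + k n + k' n : ℕ) : ℝ) * wR n ^ θ)
      - 2 * L.headI ^ θ + mstarR k k' ^ θ
    ≥ (2 - 2 ^ θ) * ((L.drop 2).map (fun x => x ^ θ)).sum :=
  stmt0_general θ hθ a k k' L hsort hL
end

section
/- Let θ ∈ (0,1), let N ≥ 2 be an integer, let x₂ ≥ x₃ ≥ … ≥ x_N > 0 be real numbers and let m ≥ 0. Then ∑_{i=2}^N x_i^θ + m^θ ≥ (∑_{i=2}^N x_i + m)^θ + (2 − 2^θ)·∑_{i=3}^N x_i^θ. -/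
/-!
Since `t ↦ t ^ θ` is concave, its increments over intervals of fixed length decrease, so for
`0 ≤ b ≤ a` we get `(a + b) ^ θ - a ^ θ ≤ (2b) ^ θ - b ^ θ = (2 ^ θ - 1) b ^ θ`. Adding the
`x_i`, `i ≥ 3`, one at a time to the running sum, which always dominates `x_2 ≥ x_i`, gives
`(∑ x_i) ^ θ ≤ x_2 ^ θ + (2 ^ θ - 1) ∑_{i ≥ 3} x_i ^ θ`; subadditivity of `t ↦ t ^ θ` absorbs `m`.
-/

theorem ConcaveOn.map_add_sub_map_le {𝕜 : Type*} [Field 𝕜] [LinearOrder 𝕜]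
    [IsStrictOrderedRing 𝕜] {s : Set 𝕜} {f : 𝕜 → 𝕜} (hf : ConcaveOn 𝕜 s f) {x y d : 𝕜}
    (hx : x ∈ s) (hyd : y + d ∈ s) (hxy : x ≤ y) (hd : 0 ≤ d) :
    f (y + d) - f y ≤ f (x + d) - f x := by
  rcases (add_nonneg (sub_nonneg.2 hxy) hd).eq_or_lt with hL | hL
  · obtain rfl : d = 0 := by linarith [sub_nonneg.2 hxy]
    obtain rfl : x = y := by linarith
    rfl
  -- `x + d` and `y` are the two mirror-image convex combinations of `x` and `y + d`.
  set a := (y - x) / (y - x + d)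
  set b := d / (y - x + d)
  have ha : 0 ≤ a := div_nonneg (sub_nonneg.2 hxy) hL.le
  have hb : 0 ≤ b := div_nonneg hd hL.le
  have hab : a + b = 1 := by simp only [a, b]; field_simp
  have hxd : a * x + b * (y + d) = x + d := by simp only [a, b]; field_simp; ring
  have hy : b * x + a * (y + d) = y := by simp only [a, b]; field_simp; ring
  have h₁ := hf.2 hx hyd ha hb hab
  have h₂ := hf.2 hx hyd hb ha (by rw [add_comm, hab])
  simp only [smul_eq_mul, hxd, hy] at h₁ h₂
  linear_combination h₁ + h₂ - (f x + f (y + d)) * hab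

theorem Real.rpow_add_le_rpow_add_mul_rpow {θ a b : ℝ} (hθ₀ : 0 ≤ θ) (hθ₁ : θ ≤ 1)
    (hb : 0 ≤ b) (hba : b ≤ a) :
    (a + b) ^ θ ≤ a ^ θ + (2 ^ θ - 1) * b ^ θ := by
  have h := (Real.concaveOn_rpow hθ₀ hθ₁).map_add_sub_map_le (Set.mem_Ici.2 hb)
    (Set.mem_Ici.2 (add_nonneg (hb.trans hba) hb)) hba hb
  rw [← two_mul, Real.mul_rpow zero_le_two hb] at h
  linarith

theorem Real.rpow_add_sum_le {ι : Type*} {θ a : ℝ} (hθ₀ : 0 ≤ θ) (hθ₁ : θ ≤ 1)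
    (s : Finset ι) {x : ι → ℝ} (hx₀ : ∀ i ∈ s, 0 ≤ x i) (hxa : ∀ i ∈ s, x i ≤ a) :
    (a + ∑ i ∈ s, x i) ^ θ ≤ a ^ θ + (2 ^ θ - 1) * ∑ i ∈ s, x i ^ θ := by
  classical
  induction s using Finset.induction_on with
  | empty => simp
  | insert j s hj ih =>
    simp only [Finset.mem_insert, forall_eq_or_imp] at hx₀ hxa
    have hsum : a ≤ a + ∑ i ∈ s, x i := le_add_of_nonneg_right (Finset.sum_nonneg hx₀.2)
    rw [Finset.sum_insert hj, Finset.sum_insert hj, add_left_comm, add_comm (x j)]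
    calc (a + ∑ i ∈ s, x i + x j) ^ θ
        ≤ (a + ∑ i ∈ s, x i) ^ θ + (2 ^ θ - 1) * x j ^ θ :=
          Real.rpow_add_le_rpow_add_mul_rpow hθ₀ hθ₁ hx₀.1 (hxa.1.trans hsum)
      _ ≤ a ^ θ + (2 ^ θ - 1) * (x j ^ θ + ∑ i ∈ s, x i ^ θ) := by
          linarith [ih hx₀.2 hxa.2]

theorem stmt1 (θ : ℝ) (hθ : θ ∈ Set.Ioo (0:ℝ) 1) (N : ℕ) (hN : 2 ≤ N)
    (x : ℕ → ℝ) (hpos : ∀ i, 2 ≤ i → i ≤ N → 0 < x i)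
    (hmono : ∀ i j, 2 ≤ i → i ≤ j → j ≤ N → x j ≤ x i)
    (m : ℝ) (hm : 0 ≤ m) :
    (∑ i ∈ Finset.Icc 2 N, x i ^ θ) + m ^ θ ≥
      ((∑ i ∈ Finset.Icc 2 N, x i) + m) ^ θ
        + (2 - 2 ^ θ) * ∑ i ∈ Finset.Icc 3 N, x i ^ θ := by
  obtain ⟨hθ₀, hθ₁⟩ := hθ
  have hIcc : Finset.Icc 3 N = Finset.Ioc 2 N := Finset.Icc_add_one_left_eq_Ioc 2 N
  have hsplit (y : ℕ → ℝ) : ∑ i ∈ Finset.Icc 2 N, y i = y 2 + ∑ i ∈ Finset.Icc 3 N, y i := by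
    rw [hIcc, Finset.add_sum_Ioc_eq_sum_Icc hN]
  have hx₀ : ∀ i ∈ Finset.Icc 3 N, 0 ≤ x i := fun i hi ↦ by
    rw [Finset.mem_Icc] at hi
    exact (hpos i (by omega) hi.2).le
  have hx₂ : ∀ i ∈ Finset.Icc 3 N, x i ≤ x 2 := fun i hi ↦ by
    rw [Finset.mem_Icc] at hi
    exact hmono 2 i le_rfl (by omega) hi.2
  have hsum_nonneg : 0 ≤ ∑ i ∈ Finset.Icc 2 N, x i := by
    rw [hsplit]
    exact add_nonneg (hpos 2 le_rfl hN).le (Finset.sum_nonneg hx₀)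
  have hsubadd := Real.rpow_add_le_add_rpow hsum_nonneg hm hθ₀.le hθ₁.le
  have hhead := Real.rpow_add_sum_le hθ₀.le hθ₁.le (Finset.Icc 3 N) hx₀ hx₂
  rw [← hsplit] at hhead
  rw [hsplit (fun i ↦ x i ^ θ)]
  linarith
end

section
/- Let θ ∈ (0,1) and let a ≥ b > 0 be real numbers. Then a^θ + b^θ ≥ (a+b)^θ + (2 − 2^θ)·b^θ. -/
/-!
Since `b ≤ a ≤ a + b` and `a + 2b = b + (a + b)`, the points `a` and `2b` are the two convex
combinations of `b` and `a + b` with swapped weights. Adding the two concavity inequalities for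
`t ↦ t ^ θ` gives `b ^ θ + (a + b) ^ θ ≤ a ^ θ + (2b) ^ θ`, and `(2b) ^ θ = 2 ^ θ b ^ θ`.
-/

theorem ConcaveOn.add_le_add_of_add_eq {𝕜 β : Type*} [Field 𝕜] [LinearOrder 𝕜]
    [IsStrictOrderedRing 𝕜] [AddCommGroup β] [PartialOrder β] [IsOrderedAddMonoid β]
    [Module 𝕜 β] {s : Set 𝕜} {f : 𝕜 → β} (hf : ConcaveOn 𝕜 s f) {x y z w : 𝕜}
    (hx : x ∈ s) (hw : w ∈ s) (hxy : x ≤ y) (hyw : y ≤ w) (hsum : y + z = x + w) :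
    f x + f w ≤ f y + f z := by
  rcases hxy.eq_or_lt with rfl | hxy
  · obtain rfl : z = w := by linear_combination hsum
    exact le_rfl
  set t := (w - y) / (w - x)
  have hwx : 0 < w - x := by linarith
  have ht0 : 0 ≤ t := div_nonneg (by linarith) hwx.le
  have ht1 : t ≤ 1 := (div_le_one hwx).2 (by linarith)
  have ht : t * (w - x) = w - y := div_mul_cancel₀ _ hwx.ne'
  have hy : t * x + (1 - t) * w = y := by linear_combination -ht
  have hz : (1 - t) * x + t * w = z := by linear_combination ht - hsum
  have h₁ := hf.2 hx hw ht0 (sub_nonneg.2 ht1) (add_sub_cancel t 1)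
  have h₂ := hf.2 hx hw (sub_nonneg.2 ht1) ht0 (sub_add_cancel 1 t)
  simp only [smul_eq_mul, hy, hz] at h₁ h₂
  calc f x + f w = (t • f x + (1 - t) • f w) + ((1 - t) • f x + t • f w) := by module
    _ ≤ f y + f z := add_le_add h₁ h₂

theorem stmt2 (θ : ℝ) (hθ : θ ∈ Set.Ioo (0:ℝ) 1) (a b : ℝ) (hb : 0 < b) (hab : b ≤ a) :
    a ^ θ + b ^ θ ≥ (a + b) ^ θ + (2 - 2 ^ θ) * b ^ θ := by
  obtain ⟨hθ0, hθ1⟩ := hθ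
  have key : b ^ θ + (a + b) ^ θ ≤ a ^ θ + (2 * b) ^ θ :=
    (Real.concaveOn_rpow hθ0.le hθ1.le).add_le_add_of_add_eq (Set.mem_Ici.2 hb.le)
      (Set.mem_Ici.2 (by linarith)) hab (by linarith) (by ring)
  rw [Real.mul_rpow zero_le_two hb.le] at key
  linarith
end

section
/- Let θ ∈ (0,1), r > 0, 0 < ρ ≤ r/2, and ε ≥ 0. Let c be a nonnegative real-valued family indexed by finitely supported functions a : ℤ → ℕ, satisfying 0 ≤ c_a ≤ ε·exp( 2ρ·∑_{n∈ℤ} a_n·w(n)^θ ) for every a, and let I : ℤ → ℝ satisfy 0 ≤ I_n ≤ exp(−2r·w(n)^θ) for all n ∈ ℤ. Then the sum (in [0,∞]) over all finitely supported a : ℤ → ℕ of c_a·∏_{n∈ℤ} I_n^{a_n} is at most ε·∏_{n∈ℤ} (1 − exp(−r·w(n)^θ))^{−1}, and this infinite product is finite (it converges since ∑_{n∈ℤ} exp(−r·w(n)^θ) < ∞). -/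
open scoped BigOperators ENNReal

/-!
With `S(a) = ∑ₙ aₙ w(n)^θ` and `qₙ = exp(-r w(n)^θ)`, the two hypotheses give
`c_a ∏ Iₙ^{aₙ} ≤ ε exp((2ρ - 2r) S(a)) ≤ ε exp(-r S(a)) = ε ∏ qₙ^{aₙ}`, using `ρ ≤ r/2`.
Summed over the `a` supported in a finite set `F`, the right-hand side factors into geometric
series and equals `ε ∏_{n ∈ F} (1 - qₙ)⁻¹`, which is bounded by the infinite product. That product
converges because `qₙ = o(w(n)^{-2})` is summable.
-/

open Filter Asymptotics

lemma wR_pos (n : ℤ) : 0 < wR n := zero_lt_one.trans_le (le_max_left _ _)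

lemma wR_neg (n : ℤ) : wR (-n) = wR n := by simp [wR]

lemma wR_natCast {n : ℕ} (hn : 1 ≤ n) : wR n = n := by
  simp [wR, Nat.one_le_cast.2 hn]

lemma isLittleO_exp_neg_mul_rpow_rpow {r θ : ℝ} (hr : 0 < r) (hθ : 0 < θ) (s : ℝ) :
    (fun x : ℝ => Real.exp (-r * x ^ θ)) =o[atTop] fun x => x ^ s := by
  refine ((isLittleO_exp_neg_mul_rpow_atTop hr (s / θ)).comp_tendsto
    (tendsto_rpow_atTop hθ)).congr' .rfl ?_
  filter_upwards [eventually_ge_atTop 0] with x hx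
  simp [← Real.rpow_mul hx, mul_div_cancel₀ _ hθ.ne']

lemma summable_exp_neg_mul_wR_rpow {r θ : ℝ} (hr : 0 < r) (hθ : 0 < θ) :
    Summable fun n : ℤ => Real.exp (-r * wR n ^ θ) := by
  have hnat : Summable fun n : ℕ => Real.exp (-r * wR n ^ θ) := by
    refine summable_of_isBigO_nat (Real.summable_nat_rpow.2 (by norm_num : (-2 : ℝ) < -1)) ?_
    refine ((isLittleO_exp_neg_mul_rpow_rpow hr hθ (-2)).comp_tendsto
      tendsto_natCast_atTop_atTop).isBigO.congr' ?_ .rfl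
    filter_upwards [eventually_ge_atTop 1] with n hn
    simp [wR_natCast hn]
  exact hnat.of_nat_of_neg (by simpa only [Int.cast_neg, wR_neg] using hnat)

namespace Finsupp

variable {ι M : Type*} [DecidableEq ι] [AddZeroClass M]

@[simps! symm_apply_coe]
noncomputable def supportSubsetInsertEquiv {j : ι} {F : Finset ι} (hj : j ∉ F) :
    {a : ι →₀ M // a.support ⊆ insert j F} ≃ M × {a : ι →₀ M // a.support ⊆ F} where
  toFun a := (a.1 j, ⟨a.1.erase j, fun n hn => by
    rw [support_erase, Finset.mem_erase] at hn
    exact (Finset.mem_insert.1 (a.2 hn.2)).resolve_left hn.1⟩)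
  invFun p := ⟨p.2.1 + single j p.1, support_add.trans <| Finset.union_subset
    (p.2.2.trans (Finset.subset_insert _ _)) (support_single_subset.trans (by simp))⟩
  left_inv a := Subtype.ext (erase_add_single j a.1)
  right_inv := by
    rintro ⟨m, b, hb⟩
    have hbj : j ∉ b.support := fun h => hj (hb h)
    refine Prod.ext ?_ (Subtype.ext ?_)
    · simp [notMem_support_iff.1 hbj]
    · simp [erase_add, erase_of_notMem_support hbj]

end Finsupp

namespace ENNReal

variable {ι : Type*}

theorem tsum_support_subset_prod_pow (Q : ι → ℝ≥0∞) (F : Finset ι) :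
    ∑' a : {a : ι →₀ ℕ // a.support ⊆ F}, ∏ n ∈ F, Q n ^ (a : ι →₀ ℕ) n
      = ∏ n ∈ F, (1 - Q n)⁻¹ := by
  classical
  induction F using Finset.induction_on with
  | empty =>
    have hzero (a : {a : ι →₀ ℕ // a.support ⊆ ∅}) : a = ⟨0, by simp⟩ :=
      Subtype.ext (Finsupp.support_eq_empty.1 (Finset.subset_empty.1 a.2))
    rw [tsum_eq_single _ fun a ha => (ha (hzero a)).elim]
    simp
  | insert j F hj ih =>
    rw [← (Finsupp.supportSubsetInsertEquiv hj).symm.tsum_eq]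
    have hterm (m : ℕ) (b : {a : ι →₀ ℕ // a.support ⊆ F}) :
        ∏ n ∈ insert j F, Q n ^ (b.1 + Finsupp.single j m) n
          = Q j ^ m * ∏ n ∈ F, Q n ^ b.1 n := by
      rw [Finset.prod_insert hj, Finsupp.add_apply, Finsupp.single_eq_same,
        Finsupp.notMem_support_iff.1 fun h => hj (b.2 h), zero_add]
      congr 1
      refine Finset.prod_congr rfl fun n hn => ?_
      rw [Finsupp.add_apply, Finsupp.single_eq_of_ne (ne_of_mem_of_not_mem hn hj), add_zero]
    simp only [Finsupp.supportSubsetInsertEquiv_symm_apply_coe, hterm, ENNReal.tsum_prod',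
      ENNReal.tsum_mul_left, ENNReal.tsum_mul_right, ENNReal.tsum_geometric, ih,
      Finset.prod_insert hj]

theorem tsum_finsupp_prod_pow_le {Q : ι → ℝ≥0∞} {B : ℝ≥0∞}
    (hB : ∀ F : Finset ι, ∏ n ∈ F, (1 - Q n)⁻¹ ≤ B) :
    ∑' a : ι →₀ ℕ, ∏ n ∈ a.support, Q n ^ a n ≤ B := by
  classical
  refine ENNReal.summable.tsum_le_of_sum_le fun s => ?_
  set F := s.sup Finsupp.support
  have hsupp (a) (ha : a ∈ s) : a.support ⊆ F := Finset.le_sup ha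
  calc ∑ a ∈ s, ∏ n ∈ a.support, Q n ^ a n
      = ∑ a ∈ s.subtype (·.support ⊆ F), ∏ n ∈ F, Q n ^ (a : ι →₀ ℕ) n := by
        rw [Finset.sum_subtype_of_mem (fun a : ι →₀ ℕ => ∏ n ∈ F, Q n ^ a n) hsupp]
        refine Finset.sum_congr rfl fun a ha => Finset.prod_subset (hsupp a ha) fun n _ hn => ?_
        rw [Finsupp.notMem_support_iff.1 hn, pow_zero]
    _ ≤ ∏ n ∈ F, (1 - Q n)⁻¹ := tsum_support_subset_prod_pow Q F ▸ ENNReal.sum_le_tsum _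
    _ ≤ B := hB F

end ENNReal

namespace Real

variable {ι : Type*}

lemma multipliable_inv_one_sub {q : ι → ℝ} (hq1 : ∀ i, q i < 1) (hq : Summable q) :
    Multipliable fun i => (1 - q i)⁻¹ :=
  multipliable_of_summable_log (fun i => inv_pos.2 (sub_pos.2 (hq1 i))) <| by
    simpa [log_inv, sub_eq_add_neg] using (summable_log_one_add_of_summable hq.neg).neg

lemma prod_le_tprod_of_one_le {f : ι → ℝ} (hf : ∀ i, 1 ≤ f i) (h : Multipliable f)
    (s : Finset ι) : ∏ i ∈ s, f i ≤ ∏' i, f i :=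
  ge_of_tendsto h.hasProd <| eventually_atTop.2 ⟨s, fun _t hst =>
    Finset.prod_le_prod_of_subset_of_one_le hst (fun i _ => zero_le_one.trans (hf i))
      fun i _ _ => hf i⟩

end Real

lemma tsum_ofReal_finsupp_prod_pow_le {ι : Type*} {q : ι → ℝ} (hq0 : ∀ i, 0 ≤ q i)
    (hq1 : ∀ i, q i < 1) (hq : Multipliable fun i => (1 - q i)⁻¹) :
    ∑' a : ι →₀ ℕ, ENNReal.ofReal (∏ n ∈ a.support, q n ^ a n)
      ≤ ENNReal.ofReal (∏' n, (1 - q n)⁻¹) := by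
  have hinv (n : ι) : (1 - ENNReal.ofReal (q n))⁻¹ = ENNReal.ofReal (1 - q n)⁻¹ := by
    rw [ENNReal.ofReal_inv_of_pos (sub_pos.2 (hq1 n)), ENNReal.ofReal_sub _ (hq0 n),
      ENNReal.ofReal_one]
  simp_rw [ENNReal.ofReal_prod_of_nonneg fun n _ => pow_nonneg (hq0 n) _,
    ENNReal.ofReal_pow (hq0 _)]
  refine ENNReal.tsum_finsupp_prod_pow_le fun F => ?_
  simp_rw [hinv, ← ENNReal.ofReal_prod_of_nonneg fun n _ => (inv_pos.2 (sub_pos.2 (hq1 n))).le]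
  exact ENNReal.ofReal_le_ofReal <| Real.prod_le_tprod_of_one_le
    (fun n => one_le_inv₀ (sub_pos.2 (hq1 n)) |>.2 (by linarith [hq0 n])) hq F

lemma prod_exp_pow {ι : Type*} (a : ι →₀ ℕ) (f : ι → ℝ) :
    ∏ n ∈ a.support, Real.exp (f n) ^ a n = Real.exp (∑ n ∈ a.support, a n * f n) := by
  rw [Real.exp_sum]
  exact Finset.prod_congr rfl fun n _ => (Real.exp_nat_mul _ _).symm

lemma mul_prod_pow_le_of_le_exp {ι : Type*} {r ρ ε C : ℝ} (hρr : ρ ≤ r / 2) (hε : 0 ≤ ε)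
    {w I : ι → ℝ} (hw : ∀ n, 0 ≤ w n) (hI : ∀ n, 0 ≤ I n ∧ I n ≤ Real.exp (-(2 * r) * w n))
    {a : ι →₀ ℕ} (hC : C ≤ ε * Real.exp (2 * ρ * ∑ n ∈ a.support, a n * w n)) :
    C * ∏ n ∈ a.support, I n ^ a n ≤ ε * ∏ n ∈ a.support, Real.exp (-r * w n) ^ a n := by
  set S := ∑ n ∈ a.support, a n * w n
  have hS : 0 ≤ S := Finset.sum_nonneg fun n _ => mul_nonneg (Nat.cast_nonneg _) (hw n)
  have hprod (s : ℝ) : ∏ n ∈ a.support, Real.exp (s * w n) ^ a n = Real.exp (s * S) := by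
    rw [prod_exp_pow, Finset.mul_sum]
    exact congrArg _ (Finset.sum_congr rfl fun n _ => by ring)
  have hIS : ∏ n ∈ a.support, I n ^ a n ≤ Real.exp (-(2 * r) * S) :=
    hprod _ ▸ Finset.prod_le_prod (fun n _ => pow_nonneg (hI n).1 _)
      fun n _ => pow_le_pow_left₀ (hI n).1 (hI n).2 _
  calc C * ∏ n ∈ a.support, I n ^ a n
      ≤ ε * Real.exp (2 * ρ * S) * Real.exp (-(2 * r) * S) :=
        mul_le_mul hC hIS (Finset.prod_nonneg fun n _ => pow_nonneg (hI n).1 _) (by positivity)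
    _ = ε * Real.exp ((2 * ρ - 2 * r) * S) := by rw [mul_assoc, ← Real.exp_add]; ring_nf
    _ ≤ ε * Real.exp (-r * S) := by gcongr; nlinarith
    _ = ε * ∏ n ∈ a.support, Real.exp (-r * w n) ^ a n := by rw [hprod]

theorem stmt11_general (θ r ρ ε : ℝ) (hθ : θ ∈ Set.Ioo (0:ℝ) 1) (hr : 0 < r)
    (hρr : ρ ≤ r / 2) (hε : 0 ≤ ε)
    (c : (ℤ →₀ ℕ) → ℝ)
    (hc : ∀ a : ℤ →₀ ℕ, 0 ≤ c a ∧
      c a ≤ ε * Real.exp (2 * ρ * ∑ n ∈ a.support, (a n : ℝ) * wR n ^ θ))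
    (I : ℤ → ℝ) (hI : ∀ n : ℤ, 0 ≤ I n ∧ I n ≤ Real.exp (-(2 * r) * wR n ^ θ)) :
    Multipliable (fun n : ℤ => (1 - Real.exp (-r * wR n ^ θ))⁻¹) ∧
    (∑' a : ℤ →₀ ℕ, ENNReal.ofReal (c a * ∏ n ∈ a.support, I n ^ a n))
      ≤ ENNReal.ofReal (ε * ∏' n : ℤ, (1 - Real.exp (-r * wR n ^ θ))⁻¹) := by
  set q : ℤ → ℝ := fun n => Real.exp (-r * wR n ^ θ)
  have hq0 (n : ℤ) : 0 ≤ q n := (Real.exp_pos _).le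
  have hq1 (n : ℤ) : q n < 1 :=
    Real.exp_lt_one_iff.mpr (by nlinarith [Real.rpow_pos_of_pos (wR_pos n) θ])
  have hmult := Real.multipliable_inv_one_sub hq1 (summable_exp_neg_mul_wR_rpow hr hθ.1)
  refine ⟨hmult, ?_⟩
  calc ∑' a : ℤ →₀ ℕ, ENNReal.ofReal (c a * ∏ n ∈ a.support, I n ^ a n)
      ≤ ∑' a : ℤ →₀ ℕ, ENNReal.ofReal ε * ENNReal.ofReal (∏ n ∈ a.support, q n ^ a n) :=
        ENNReal.tsum_le_tsum fun a => by
          rw [← ENNReal.ofReal_mul hε]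
          exact ENNReal.ofReal_le_ofReal <| mul_prod_pow_le_of_le_exp hρr hε
            (fun n => (Real.rpow_pos_of_pos (wR_pos n) θ).le) hI (hc a).2
    _ ≤ ENNReal.ofReal ε * ENNReal.ofReal (∏' n, (1 - q n)⁻¹) := by
        rw [ENNReal.tsum_mul_left]
        gcongr
        exact tsum_ofReal_finsupp_prod_pow_le hq0 hq1 hmult
    _ = ENNReal.ofReal (ε * ∏' n, (1 - q n)⁻¹) := (ENNReal.ofReal_mul hε).symm

theorem stmt11 (θ r ρ ε : ℝ) (hθ : θ ∈ Set.Ioo (0:ℝ) 1) (hr : 0 < r)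
    (hρ : 0 < ρ) (hρr : ρ ≤ r / 2) (hε : 0 ≤ ε)
    (c : (ℤ →₀ ℕ) → ℝ)
    (hc : ∀ a : ℤ →₀ ℕ, 0 ≤ c a ∧
      c a ≤ ε * Real.exp (2 * ρ * ∑ n ∈ a.support, (a n : ℝ) * wR n ^ θ))
    (I : ℤ → ℝ) (hI : ∀ n : ℤ, 0 ≤ I n ∧ I n ≤ Real.exp (-(2 * r) * wR n ^ θ)) :
    Multipliable (fun n : ℤ => (1 - Real.exp (-r * wR n ^ θ))⁻¹) ∧
    (∑' a : ℤ →₀ ℕ, ENNReal.ofReal (c a * ∏ n ∈ a.support, I n ^ a n))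
      ≤ ENNReal.ofReal (ε * ∏' n : ℤ, (1 - Real.exp (-r * wR n ^ θ))⁻¹) :=
  stmt11_general θ r ρ ε hθ hr hρr hε c hc I hI
end
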